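/- arXiv:1111.6903 — 5 statements merged into one kernel-verified Lean document; each statement's English description precedes it below -/
import Mathlib

section
/- Define E(x,h) = φ(x,h) − (√(2x²) − R₀) where φ(x,h) = 2x√(h²+2hx+2x²)/(h+2x) − R₀. Then for each fixed x > 0, E(x,h) = O(h²) as h → 0⁺; precisely, lim_{h→0⁺} E(x,h)/h² exists and is finite. -/
/-!
With `s = √(h² + 2hx + 2x²)` and `c = √(2x²)`, the error is `(2x·s − c(h + 2x))/(h + 2x)`, and
multiplying by the conjugate `2x·s + c(h + 2x)` gives `4x²s² − c²(h + 2x)² = 2x²h²`. So `E(x,h)/h²`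
is `2x² / ((h + 2x)(2x·s + c(h + 2x)))`, continuous at `h = 0`, with limit `1/(4c)` there.
-/

noncomputable def afmmDiagonalErrorQuotient (x h : ℝ) : ℝ :=
  2 * x ^ 2 / ((h + 2 * x) *
    (2 * x * √(h ^ 2 + 2 * h * x + 2 * x ^ 2) + √(2 * x ^ 2) * (h + 2 * x)))

lemma afmm_diagonal_error_div_sq_eq {x h : ℝ} (hx : 0 < x) (hh : 0 < h + 2 * x) (h0 : h ≠ 0) :
    (2 * x * √(h ^ 2 + 2 * h * x + 2 * x ^ 2) / (h + 2 * x) - √(2 * x ^ 2)) / h ^ 2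
      = afmmDiagonalErrorQuotient x h := by
  have hs_sq : √(h ^ 2 + 2 * h * x + 2 * x ^ 2) ^ 2 = h ^ 2 + 2 * h * x + 2 * x ^ 2 :=
    Real.sq_sqrt (by nlinarith [sq_nonneg (h + x)])
  have hc_sq : √(2 * x ^ 2) ^ 2 = 2 * x ^ 2 := Real.sq_sqrt (by positivity)
  have hs_pos : 0 < √(h ^ 2 + 2 * h * x + 2 * x ^ 2) :=
    Real.sqrt_pos.mpr (by nlinarith [sq_nonneg (h + x)])
  have hc_pos : 0 < √(2 * x ^ 2) := Real.sqrt_pos.mpr (by positivity)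
  have hconj : 0 < 2 * x * √(h ^ 2 + 2 * h * x + 2 * x ^ 2) + √(2 * x ^ 2) * (h + 2 * x) := by
    positivity
  unfold afmmDiagonalErrorQuotient
  generalize √(h ^ 2 + 2 * h * x + 2 * x ^ 2) = s at *
  generalize √(2 * x ^ 2) = c at *
  field_simp
  linear_combination (4 * x ^ 2) * hs_sq - (h + 2 * x) ^ 2 * hc_sq

lemma continuousAt_afmmDiagonalErrorQuotient {x : ℝ} (hx : 0 < x) :
    ContinuousAt (afmmDiagonalErrorQuotient x) 0 := by
  have hc_pos : 0 < √(2 * x ^ 2) := Real.sqrt_pos.mpr (by positivity)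
  have hs_pos : 0 < √((0 : ℝ) ^ 2 + 2 * 0 * x + 2 * x ^ 2) :=
    Real.sqrt_pos.mpr (by positivity)
  unfold afmmDiagonalErrorQuotient
  refine continuousAt_const.div (by fun_prop) ?_
  positivity

lemma afmmDiagonalErrorQuotient_zero {x : ℝ} (hx : 0 < x) :
    afmmDiagonalErrorQuotient x 0 = 1 / (4 * √(2 * x ^ 2)) := by
  have hc_pos : 0 < √(2 * x ^ 2) := Real.sqrt_pos.mpr (by positivity)
  unfold afmmDiagonalErrorQuotient
  norm_num
  field_simp
  ring

/-- The AFMM diagonal level-set error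
`E(x,h) = 2x√(h²+2hx+2x²)/(h+2x) − √(2x²)` is `O(h²)` as `h → 0⁺` for each fixed
`x > 0`: the limit of `E(x,h)/h²` exists and is finite. -/
theorem afmm_level_set_error_second_order (x : ℝ) (hx : 0 < x) :
    ∃ L : ℝ, Filter.Tendsto
      (fun h : ℝ =>
        (2 * x * Real.sqrt (h ^ 2 + 2 * h * x + 2 * x ^ 2) / (h + 2 * x)
          - Real.sqrt (2 * x ^ 2)) / h ^ 2)
      (nhdsWithin 0 (Set.Ioi 0)) (nhds L) := by
  refine ⟨1 / (4 * √(2 * x ^ 2)), ?_⟩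
  rw [← afmmDiagonalErrorQuotient_zero hx]
  refine (continuousAt_afmmDiagonalErrorQuotient hx).continuousWithinAt.tendsto.congr' ?_
  filter_upwards [self_mem_nhdsWithin] with h (hh : 0 < h)
  exact (afmm_diagonal_error_div_sq_eq hx (by linarith) hh.ne').symm
end

section
/- Define the gradient error G(x,h) = √( 2·(ψ(x,h) − 1/√2)² ) where ψ(x,h) = (h+2x)/(2√(h²+2hx+2x²)). Then for each fixed x > 0, G(x,h) = O(h²) as h → 0⁺. -/
/-- The AFMM diagonal gradient error
`G(x,h) = √(2(ψ(x,h) − 1/√2)²)` with `ψ(x,h) = (h+2x)/(2√(h²+2hx+2x²))`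
is `O(h²)` as `h → 0⁺` for each fixed `x > 0`. -/
theorem afmm_gradient_error_second_order (x : ℝ) (hx : 0 < x) :
    (fun h : ℝ =>
        Real.sqrt (2 * ((h + 2 * x) / (2 * Real.sqrt (h ^ 2 + 2 * h * x + 2 * x ^ 2))
          - 1 / Real.sqrt 2) ^ 2))
      =O[nhdsWithin 0 (Set.Ioi 0)] (fun h : ℝ => h ^ 2) := by
  rw [Asymptotics.isBigO_iff]
  refine ⟨Real.sqrt 2 / (4 * x ^ 2), ?_⟩
  filter_upwards [self_mem_nhdsWithin] with h hh
  simp only [Set.mem_Ioi] at hh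
  set D := h ^ 2 + 2 * h * x + 2 * x ^ 2 with hD
  have hDpos : 0 < D := by positivity
  have hsD : 0 < Real.sqrt D := Real.sqrt_pos.mpr hDpos
  have h2D : Real.sqrt (2 * D) = Real.sqrt 2 * Real.sqrt D :=
    Real.sqrt_mul (by norm_num) _
  have hs2D : (Real.sqrt (2 * D)) ^ 2 = 2 * D := Real.sq_sqrt (by positivity)
  have hs2 : Real.sqrt 2 * Real.sqrt 2 = 2 :=
    Real.mul_self_sqrt (by norm_num)
  set u := (h + 2 * x) / (2 * Real.sqrt D) - 1 / Real.sqrt 2 with hu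
  have hsumpos : 0 < h + 2 * x + Real.sqrt (2 * D) := by positivity
  have key : u = -h ^ 2 / ((h + 2 * x + Real.sqrt (2 * D)) * (2 * Real.sqrt D)) := by
    have h1 : 1 / Real.sqrt 2 = Real.sqrt (2 * D) / (2 * Real.sqrt D) := by
      rw [h2D]
      rw [div_eq_div_iff (by positivity) (by positivity)]
      nlinarith [hs2, hsD]
    rw [hu, h1, div_sub_div_same, div_eq_div_iff (by positivity) (by positivity)]
    nlinarith [hs2D]
  have habs : |u| ≤ h ^ 2 / (4 * x ^ 2) := by
    rw [key, abs_div, abs_neg, abs_of_nonneg (by positivity : (0:ℝ) ≤ h ^ 2),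
      abs_of_pos (by positivity : (0:ℝ) < (h + 2 * x + Real.sqrt (2 * D)) * (2 * Real.sqrt D))]
    have hsDx : x ≤ Real.sqrt D := by
      rw [show x = Real.sqrt (x ^ 2) by rw [Real.sqrt_sq hx.le]]
      exact Real.sqrt_le_sqrt (by nlinarith)
    have hdenom : 4 * x ^ 2 ≤ (h + 2 * x + Real.sqrt (2 * D)) * (2 * Real.sqrt D) := by
      nlinarith [Real.sqrt_nonneg (2 * D), hsDx, hh]
    exact div_le_div_of_nonneg_left (by positivity) (by positivity) hdenom
  have hG : Real.sqrt (2 * u ^ 2) = Real.sqrt 2 * |u| := by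
    rw [Real.sqrt_mul (by norm_num), Real.sqrt_sq_eq_abs]
  rw [Real.norm_eq_abs, Real.norm_eq_abs, hG,
    abs_of_nonneg (by positivity : (0:ℝ) ≤ Real.sqrt 2 * |u|),
    abs_of_nonneg (by positivity : (0:ℝ) ≤ h ^ 2)]
  rw [div_mul_eq_mul_div]
  calc Real.sqrt 2 * |u| ≤ Real.sqrt 2 * (h ^ 2 / (4 * x ^ 2)) := by
        exact mul_le_mul_of_nonneg_left habs (Real.sqrt_nonneg 2)
    _ = Real.sqrt 2 * h ^ 2 / (4 * x ^ 2) := by ring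
end

section
/- For fixed h > 0, the limit of the computed gradient component ψ(x,h) = (h+2x)/(2√(h²+2hx+2x²)) as x → 0⁺ is 1/2, and hence the gradient error limit is √2·|1/2 − 1/√2| = (√2 − 1)/√2, independent of h. -/
/-- For fixed `h > 0`, the computed gradient component
`ψ(x,h) = (h+2x)/(2√(h²+2hx+2x²))` tends to `1/2` as `x → 0⁺`, and the resulting
gradient error is `√2·|1/2 − 1/√2| = (√2 − 1)/√2`, independent of `h`. -/
theorem afmm_gradient_error_fixed_at_origin (h : ℝ) (hh : 0 < h) :
    Filter.Tendsto
      (fun x : ℝ => (h + 2 * x) / (2 * Real.sqrt (h ^ 2 + 2 * h * x + 2 * x ^ 2)))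
      (nhdsWithin 0 (Set.Ioi 0)) (nhds (1 / 2)) ∧
    Real.sqrt 2 * |1 / 2 - 1 / Real.sqrt 2| = (Real.sqrt 2 - 1) / Real.sqrt 2 := by
  constructor
  · have hc : ContinuousAt
        (fun x : ℝ => (h + 2 * x) / (2 * Real.sqrt (h ^ 2 + 2 * h * x + 2 * x ^ 2))) 0 := by
      apply ContinuousAt.div
      · fun_prop
      · fun_prop
      · have : h ^ 2 + 2 * h * 0 + 2 * 0 ^ 2 = h ^ 2 := by ring
        rw [this, Real.sqrt_sq hh.le]
        positivity
    have := hc.continuousWithinAt (s := Set.Ioi 0)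
    have hval : (h + 2 * (0:ℝ)) / (2 * Real.sqrt (h ^ 2 + 2 * h * 0 + 2 * 0 ^ 2)) = 1 / 2 := by
      have : h ^ 2 + 2 * h * 0 + 2 * (0:ℝ) ^ 2 = h ^ 2 := by ring
      rw [this, Real.sqrt_sq hh.le]
      field_simp
      ring
    have hval2 : h / (2 * Real.sqrt (h ^ 2)) = 1/2 := by
      rw [Real.sqrt_sq hh.le]; field_simp
    rw [ContinuousWithinAt] at this
    rw [show h + 2 * (0:ℝ) = h by ring, show h^2 + 2*h*(0:ℝ) + 2*(0:ℝ)^2 = h^2 by ring, hval2] at this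
    exact this
  · have h2 : (0:ℝ) < Real.sqrt 2 := Real.sqrt_pos.mpr (by norm_num)
    have hlt : (1:ℝ) / 2 < 1 / Real.sqrt 2 := by
      rw [div_lt_div_iff₀ (by norm_num) h2]
      nlinarith [Real.sq_sqrt (by norm_num : (2:ℝ) ≥ 0), Real.sqrt_lt_sqrt (by norm_num : (2:ℝ) ≥ 0) (by norm_num : (2:ℝ) < 4)]
    rw [abs_of_neg (by linarith)]
    have hs : Real.sqrt 2 * Real.sqrt 2 = 2 := Real.mul_self_sqrt (by norm_num)
    field_simp
    nlinarith [hs]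
end

section
/- For fixed h > 0, the limit as x → 0⁺ of the level-set error E(x,h) = 2x√(h²+2hx+2x²)/(h+2x) − √2·x is 0, and moreover sup over x ∈ (0, L] of |E(x,h)| is O(h) as h → 0 (for any fixed L > 0). -/
lemma afmm_key (h x : ℝ) (hh : 0 < h) (hx : 0 < x) :
    |2 * x * Real.sqrt (h ^ 2 + 2 * h * x + 2 * x ^ 2) / (h + 2 * x)
      - Real.sqrt 2 * x| ≤ h := by
  set s := Real.sqrt (h ^ 2 + 2 * h * x + 2 * x ^ 2) with hs
  have hd : 0 < h + 2 * x := by linarith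
  have h2 : Real.sqrt 2 ≤ 2 := by
    nlinarith [Real.sq_sqrt (by norm_num : (2:ℝ) ≥ 0), Real.sqrt_nonneg 2]
  have h1 : 1 ≤ Real.sqrt 2 := by
    nlinarith [Real.sq_sqrt (by norm_num : (2:ℝ) ≥ 0), Real.sqrt_nonneg 2]
  have hlo : Real.sqrt 2 * x ≤ s := by
    rw [hs]
    have : Real.sqrt 2 * x = Real.sqrt (2 * x ^ 2) := by
      rw [Real.sqrt_mul (by norm_num), Real.sqrt_sq hx.le]
    rw [this]
    exact Real.sqrt_le_sqrt (by nlinarith)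
  have hhi : s ≤ h + Real.sqrt 2 * x := by
    rw [hs]
    have hnn : 0 ≤ h + Real.sqrt 2 * x := by nlinarith
    rw [show h ^ 2 + 2 * h * x + 2 * x ^ 2 =
        (h + Real.sqrt 2 * x) ^ 2 - (2 * Real.sqrt 2 - 2) * h * x by
      nlinarith [Real.sq_sqrt (by norm_num : (2:ℝ) ≥ 0)]]
    calc Real.sqrt ((h + Real.sqrt 2 * x) ^ 2 - (2 * Real.sqrt 2 - 2) * h * x)
        ≤ Real.sqrt ((h + Real.sqrt 2 * x) ^ 2) := Real.sqrt_le_sqrt (by nlinarith [mul_pos hh hx])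
      _ = h + Real.sqrt 2 * x := Real.sqrt_sq hnn
  have heq : 2 * x * s / (h + 2 * x) - Real.sqrt 2 * x
      = (2 * x * s - Real.sqrt 2 * x * (h + 2 * x)) / (h + 2 * x) := by
    field_simp
  rw [heq, abs_div, abs_of_pos hd, div_le_iff₀ hd]
  rw [abs_le]
  have key1 : 2 * x * (Real.sqrt 2 * x) ≤ 2 * x * s :=
    mul_le_mul_of_nonneg_left hlo (by linarith)
  have key2 : 2 * x * s ≤ 2 * x * (h + Real.sqrt 2 * x) :=
    mul_le_mul_of_nonneg_left hhi (by linarith)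
  have hxh : 0 < x * h := mul_pos hx hh
  constructor
  · nlinarith [mul_pos hx hh, mul_nonneg (Real.sqrt_nonneg 2) hxh.le]
  · nlinarith [mul_pos hx hh, mul_nonneg (Real.sqrt_nonneg 2) hxh.le]

/-- The AFMM diagonal level-set error `E(x,h) = 2x√(h²+2hx+2x²)/(h+2x) − √2·x`
tends to `0` as `x → 0⁺` for fixed `h > 0`, and for any fixed `L > 0` the sup of
`|E(x,h)|` over `x ∈ (0, L]` is `O(h)` as `h → 0⁺`. -/
theorem afmm_level_set_error_max_first_order :
    (∀ h : ℝ, 0 < h →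
      Filter.Tendsto
        (fun x : ℝ =>
          2 * x * Real.sqrt (h ^ 2 + 2 * h * x + 2 * x ^ 2) / (h + 2 * x)
            - Real.sqrt 2 * x)
        (nhdsWithin 0 (Set.Ioi 0)) (nhds 0)) ∧
    (∀ L : ℝ, 0 < L →
      (fun h : ℝ => ⨆ x ∈ Set.Ioc (0 : ℝ) L,
          |2 * x * Real.sqrt (h ^ 2 + 2 * h * x + 2 * x ^ 2) / (h + 2 * x)
            - Real.sqrt 2 * x|)
        =O[nhdsWithin 0 (Set.Ioi 0)] (fun h : ℝ => h)) := by
  constructor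
  · intro h hh
    have hc : ContinuousAt (fun x : ℝ =>
        2 * x * Real.sqrt (h ^ 2 + 2 * h * x + 2 * x ^ 2) / (h + 2 * x)
          - Real.sqrt 2 * x) 0 := by
      apply ContinuousAt.sub
      · apply ContinuousAt.div
        · fun_prop
        · fun_prop
        · simpa using hh.ne'
      · fun_prop
    have ht := hc.tendsto.mono_left (nhdsWithin_le_nhds (s := Set.Ioi 0))
    simpa using ht
  · intro L hL
    rw [Asymptotics.isBigO_iff]
    refine ⟨1, ?_⟩
    filter_upwards [self_mem_nhdsWithin] with h (hh : 0 < h)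
    rw [one_mul, Real.norm_eq_abs, Real.norm_eq_abs, abs_of_pos hh, abs_le]
    constructor
    · have : (0:ℝ) ≤ ⨆ x ∈ Set.Ioc (0 : ℝ) L,
          |2 * x * Real.sqrt (h ^ 2 + 2 * h * x + 2 * x ^ 2) / (h + 2 * x)
            - Real.sqrt 2 * x| := by
        apply Real.iSup_nonneg
        intro x
        apply Real.iSup_nonneg
        intro _
        positivity
      linarith
    · apply Real.iSup_le _ hh.le
      intro x
      apply Real.iSup_le _ hh.le
      intro hx
      exact afmm_key h x hh hx.1
end

section
/- For all x > 0 and h > 0, the computed gradient component ψ(x,h) = (h+2x)/(2√(h²+2hx+2x²)) satisfies 1/2 < ψ(x,h) ≤ 1/√2, with equality ψ = 1/√2 only in the limit h/x → 0. -/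
/-- For all `x > 0`, `h > 0`, the computed gradient component
`ψ(x,h) = (h+2x)/(2√(h²+2hx+2x²))` satisfies `1/2 < ψ(x,h) < 1/√2`, and the
value `1/√2` is attained only in the limit `h → 0⁺`. -/
theorem afmm_gradient_component_bounds :
    (∀ x h : ℝ, 0 < x → 0 < h →
      1 / 2 < (h + 2 * x) / (2 * Real.sqrt (h ^ 2 + 2 * h * x + 2 * x ^ 2)) ∧
      (h + 2 * x) / (2 * Real.sqrt (h ^ 2 + 2 * h * x + 2 * x ^ 2)) < 1 / Real.sqrt 2) ∧
    (∀ x : ℝ, 0 < x →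
      Filter.Tendsto
        (fun h : ℝ => (h + 2 * x) / (2 * Real.sqrt (h ^ 2 + 2 * h * x + 2 * x ^ 2)))
        (nhdsWithin 0 (Set.Ioi 0)) (nhds (1 / Real.sqrt 2))) := by
  constructor
  · intro x h hx hh
    have hQ : (0:ℝ) < h ^ 2 + 2 * h * x + 2 * x ^ 2 := by nlinarith
    set s := Real.sqrt (h ^ 2 + 2 * h * x + 2 * x ^ 2) with hsdef
    have hs : 0 < s := Real.sqrt_pos.mpr hQ
    have hs2 : s ^ 2 = h ^ 2 + 2 * h * x + 2 * x ^ 2 := Real.sq_sqrt hQ.le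
    constructor
    · rw [div_lt_div_iff₀ two_pos (by positivity)]
      nlinarith [hs, hs2, sq_nonneg (s - x)]
    · have h2 : (0:ℝ) < Real.sqrt 2 := by positivity
      rw [div_lt_div_iff₀ (by positivity) h2]
      have key : ((h + 2 * x) * Real.sqrt 2) ^ 2 < (2 * s) ^ 2 := by
        have : (Real.sqrt 2) ^ 2 = 2 := Real.sq_sqrt (by norm_num)
        nlinarith [hs2, sq_nonneg h, hh]
      have hb : 0 ≤ (h + 2 * x) * Real.sqrt 2 := by positivity
      nlinarith [key, hb, hs]
  · intro x hx
    have hx2 : Real.sqrt (2 * x ^ 2) = Real.sqrt 2 * x := by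
      rw [Real.sqrt_mul (by norm_num), Real.sqrt_sq hx.le]
    have hc : ContinuousAt
        (fun h : ℝ => (h + 2 * x) / (2 * Real.sqrt (h ^ 2 + 2 * h * x + 2 * x ^ 2))) 0 := by
      apply ContinuousAt.div
      · fun_prop
      · fun_prop
      · simp only [ne_eq, zero_pow, zero_mul, zero_add, mul_eq_zero]
        push_neg
        constructor
        · norm_num
        · rw [show (0:ℝ) ^ 2 + 2 * 0 * x + 2 * x ^ 2 = 2 * x ^ 2 by ring, hx2]
          positivity
    have := hc.continuousWithinAt (s := Set.Ioi 0) |>.tendsto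
    convert this using 2
    rw [show (0:ℝ) ^ 2 + 2 * 0 * x + 2 * x ^ 2 = 2 * x ^ 2 by ring, hx2]
    have h2 : (0:ℝ) < Real.sqrt 2 := by positivity
    field_simp
    ring
end
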